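/- arXiv:2010.15505 — 2 statements merged into one kernel-verified Lean document; each statement's English description precedes it below -/
import Mathlib

section
/- Inverse half-characteristic functional relation: for all complex u, v, 2 · Θ[1/2,1/2;0,0](2u,2v) · ( Θ[1/2,1/2;0,0](0,0)² − Θ[1/2,−1/2;0,0](0,0)² ) = θ[1,1;0,0](u,v) θ[0,0;0,0](u,v) Θ[1/2,1/2;0,0](0,0) − θ[0,1;0,0](u,v) θ[1,0;0,0](u,v) Θ[1/2,−1/2;0,0](0,0) − i · ( θ[1,1;1,0](u,v) θ[0,0;1,0](u,v) Θ[1/2,1/2;0,0](0,0) − θ[1,0;1,0](u,v) θ[0,1;1,0](u,v) Θ[1/2,−1/2;0,0](0,0) ), where i = √−1. -/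
/-!
Parallelogram law: for the quadratic form `Q` of the moduli, `Q(m) + Q(m') = 2 Q((m + m')/2) +
2 Q((m - m')/2)`. Writing `m = k + l + e`, `m' = k - l` with a parity vector `e ∈ {0,1}²`, a product
`θ[a,c] θ[a',c']` of two theta series with common lower characteristic therefore splits into
`Σ_e Θ[(a+a')/2 + e](2x, 2y) · Θ[(a-a')/2 + e](0, 0)`.

Applied to the four products on the right-hand side, with upper characteristics reduced
modulo 2 and `Θ[α,β](0,0) = Θ[-α,-β](0,0)`, the cross terms `Θ[±1/2, ∓1/2](2u, 2v)` cancel,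
leaving `(Θ[1/2,1/2] + Θ[-1/2,-1/2])(2u, 2v)` times `Θ[1/2,1/2]² - Θ[1/2,-1/2]²` (at the
origin). Shifting the lower characteristic `b` by `1` multiplies `Θ[±1/2, ±1/2](2u, 2v)` by
`±i`, which isolates `2 Θ[1/2,1/2](2u, 2v)`.
-/

open Complex

/-- Genus-two theta function with real characteristics `a c b d`
(upper characteristics `a, c`, lower characteristics `b, d`),
moduli `τ₁ τ₂ τ₁₂` and complex arguments `x y`. -/
noncomputable def theta (τ₁ τ₂ τ₁₂ : ℂ) (a c b d : ℝ) (x y : ℂ) : ℂ :=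
  ∑' p : ℤ × ℤ,
    Complex.exp
      ((Real.pi : ℂ) * Complex.I *
          (τ₁ * ((p.1 : ℂ) + (a : ℂ) / 2) ^ 2 + τ₂ * ((p.2 : ℂ) + (c : ℂ) / 2) ^ 2 +
            2 * τ₁₂ * ((p.1 : ℂ) + (a : ℂ) / 2) * ((p.2 : ℂ) + (c : ℂ) / 2)) +
        2 * (Real.pi : ℂ) * Complex.I *
          (((p.1 : ℂ) + (a : ℂ) / 2) * (x + (b : ℂ) / 2) +
            ((p.2 : ℂ) + (c : ℂ) / 2) * (y + (d : ℂ) / 2)))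

/-- The same theta function with doubled moduli `2τ₁, 2τ₂, 2τ₁₂`. -/
noncomputable def Theta2 (τ₁ τ₂ τ₁₂ : ℂ) (a c b d : ℝ) (x y : ℂ) : ℂ :=
  theta (2 * τ₁) (2 * τ₂) (2 * τ₁₂) a c b d x y

open Real

noncomputable def thetaTerm (τ₁ τ₂ τ₁₂ : ℂ) (a c b d : ℝ) (x y : ℂ) (p : ℤ × ℤ) : ℂ :=
  cexp (π * I *
        (τ₁ * ((p.1 : ℂ) + (a : ℂ) / 2) ^ 2 + τ₂ * ((p.2 : ℂ) + (c : ℂ) / 2) ^ 2 +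
          2 * τ₁₂ * ((p.1 : ℂ) + (a : ℂ) / 2) * ((p.2 : ℂ) + (c : ℂ) / 2)) +
      2 * π * I *
        (((p.1 : ℂ) + (a : ℂ) / 2) * (x + (b : ℂ) / 2) +
          ((p.2 : ℂ) + (c : ℂ) / 2) * (y + (d : ℂ) / 2)))

lemma theta_eq_tsum (τ₁ τ₂ τ₁₂ : ℂ) (a c b d : ℝ) (x y : ℂ) :
    theta τ₁ τ₂ τ₁₂ a c b d x y = ∑' p : ℤ × ℤ, thetaTerm τ₁ τ₂ τ₁₂ a c b d x y p := rfl

lemma norm_thetaTerm (τ₁ τ₂ τ₁₂ : ℂ) (a c b d : ℝ) (x y : ℂ) (p : ℤ × ℤ) :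
    ‖thetaTerm τ₁ τ₂ τ₁₂ a c b d x y p‖ =
      rexp (-π * (τ₁.im * ((p.1 : ℝ) + a / 2) ^ 2 + τ₂.im * ((p.2 : ℝ) + c / 2) ^ 2 +
            2 * τ₁₂.im * ((p.1 : ℝ) + a / 2) * ((p.2 : ℝ) + c / 2))
          - 2 * π * (((p.1 : ℝ) + a / 2) * x.im + ((p.2 : ℝ) + c / 2) * y.im)) := by
  rw [thetaTerm, Complex.norm_exp]
  congr 1
  simp only [pow_two, add_re, mul_re, ofReal_re, I_re, mul_zero, ofReal_im, I_im, mul_one,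
    sub_self, intCast_re, div_ofNat_re, add_im, intCast_im, div_ofNat_im, zero_div, add_zero,
    sub_zero, mul_im, zero_mul, re_ofNat, im_ofNat, zero_add, zero_sub, neg_mul]
  ring

lemma summable_exp_neg_mul_add_sq {δ : ℝ} (hδ : 0 < δ) (α X : ℝ) :
    Summable fun m : ℤ => rexp (-π * δ * ((m : ℝ) + α) ^ 2 - 2 * π * ((m : ℝ) + α) * X) := by
  have h := ((summable_jacobiTheta₂_term_iff ((δ * α + X : ℝ) * I) (δ * I)).mpr
    (by simpa using hδ)).norm.mul_left (rexp (-π * δ * α ^ 2 - 2 * π * α * X))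
  refine h.congr fun m => ?_
  rw [norm_jacobiTheta₂_term, ← Real.exp_add]
  congr 1
  simp only [neg_mul, mul_im, ofReal_re, I_im, mul_one, ofReal_im, I_re, mul_zero, add_zero,
    ofReal_add, ofReal_mul, add_re, mul_re, sub_zero, add_im, zero_mul]
  ring

lemma exists_pos_mul_sq_add_sq_le {y₁ y₂ y₁₂ : ℝ} (h₁ : 0 < y₁) (h₂ : 0 < y₂)
    (h : y₁₂ ^ 2 < y₁ * y₂) :
    ∃ δ > 0, ∀ s t : ℝ, δ * (s ^ 2 + t ^ 2) ≤ y₁ * s ^ 2 + y₂ * t ^ 2 + 2 * y₁₂ * s * t := by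
  refine ⟨(y₁ * y₂ - y₁₂ ^ 2) / (y₁ + y₂), div_pos (by linarith) (by linarith), fun s t => ?_⟩
  rw [div_mul_eq_mul_div, div_le_iff₀ (by linarith)]
  nlinarith [sq_nonneg (y₁ * s + y₁₂ * t), sq_nonneg (y₂ * t + y₁₂ * s)]

lemma summable_norm_thetaTerm {τ₁ τ₂ τ₁₂ : ℂ} (hτ₁ : 0 < τ₁.im) (hτ₂ : 0 < τ₂.im)
    (hτ : τ₁₂.im ^ 2 < τ₁.im * τ₂.im) (a c b d : ℝ) (x y : ℂ) :
    Summable fun p : ℤ × ℤ => ‖thetaTerm τ₁ τ₂ τ₁₂ a c b d x y p‖ := by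
  obtain ⟨δ, hδ, hq⟩ := exists_pos_mul_sq_add_sq_le hτ₁ hτ₂ hτ
  have hprod := (summable_exp_neg_mul_add_sq hδ (a / 2) x.im).mul_of_nonneg
    (summable_exp_neg_mul_add_sq hδ (c / 2) y.im)
    (fun _ => (Real.exp_pos _).le) (fun _ => (Real.exp_pos _).le)
  refine hprod.of_nonneg_of_le (fun _ => norm_nonneg _) fun p => ?_
  rw [norm_thetaTerm, ← Real.exp_add, Real.exp_le_exp]
  nlinarith [mul_le_mul_of_nonneg_left (hq ((p.1 : ℝ) + a / 2) ((p.2 : ℝ) + c / 2)) pi_pos.le]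

def sumDiffEquiv : Bool × ℤ × ℤ ≃ ℤ × ℤ where
  toFun w := (w.2.1 + w.2.2 + w.1.toNat, w.2.1 - w.2.2)
  invFun p := (decide ((p.1 - p.2) % 2 = 1),
    ((p.1 + p.2 - (p.1 - p.2) % 2) / 2, (p.1 - p.2 - (p.1 - p.2) % 2) / 2))
  left_inv := by
    rintro ⟨_ | _, k, l⟩ <;>
      simp only [Bool.toNat_false, Bool.toNat_true, Nat.cast_zero, Nat.cast_one, add_zero,
        Prod.mk.injEq, decide_eq_false_iff_not, decide_eq_true_eq] <;> omega
  right_inv := by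
    rintro ⟨m, m'⟩
    rcases Int.emod_two_eq_zero_or_one (m - m') with h | h <;>
      simp only [h, decide_false, decide_true, zero_ne_one, Bool.toNat_false, Bool.toNat_true,
        Nat.cast_zero, Nat.cast_one, add_zero, sub_zero, Prod.mk.injEq] <;> omega

def pairSumDiffEquiv : (Bool × Bool) × (ℤ × ℤ) × (ℤ × ℤ) ≃ (ℤ × ℤ) × (ℤ × ℤ) :=
  ((Equiv.refl (Bool × Bool)).prodCongr (Equiv.prodProdProdComm ℤ ℤ ℤ ℤ)).trans
    ((Equiv.prodProdProdComm Bool Bool (ℤ × ℤ) (ℤ × ℤ)).trans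
      ((sumDiffEquiv.prodCongr sumDiffEquiv).trans (Equiv.prodProdProdComm ℤ ℤ ℤ ℤ)))

lemma pairSumDiffEquiv_apply (e₁ e₂ : Bool) (k₁ k₂ l₁ l₂ : ℤ) :
    pairSumDiffEquiv ((e₁, e₂), ((k₁, k₂), (l₁, l₂))) =
      ((k₁ + l₁ + e₁.toNat, k₂ + l₂ + e₂.toNat), (k₁ - l₁, k₂ - l₂)) := rfl

lemma thetaTerm_mul_thetaTerm (τ₁ τ₂ τ₁₂ : ℂ) (a c a' c' b d : ℝ) (x y : ℂ)
    (e₁ e₂ k₁ k₂ l₁ l₂ : ℤ) :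
    thetaTerm τ₁ τ₂ τ₁₂ a c b d x y (k₁ + l₁ + e₁, k₂ + l₂ + e₂) *
      thetaTerm τ₁ τ₂ τ₁₂ a' c' b d x y (k₁ - l₁, k₂ - l₂) =
    thetaTerm (2 * τ₁) (2 * τ₂) (2 * τ₁₂) ((a + a') / 2 + e₁) ((c + c') / 2 + e₂)
        (2 * b) (2 * d) (2 * x) (2 * y) (k₁, k₂) *
      thetaTerm (2 * τ₁) (2 * τ₂) (2 * τ₁₂) ((a - a') / 2 + e₁) ((c - c') / 2 + e₂) 0 0 0 0
        (l₁, l₂) := by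
  simp only [thetaTerm, ← Complex.exp_add]
  congr 1
  push_cast
  ring

lemma tsum_thetaTerm_mul_thetaTerm_pairSumDiffEquiv {τ₁ τ₂ τ₁₂ : ℂ} (hτ₁ : 0 < τ₁.im)
    (hτ₂ : 0 < τ₂.im) (hτ : τ₁₂.im ^ 2 < τ₁.im * τ₂.im) (a c a' c' b d : ℝ) (x y : ℂ)
    (e₁ e₂ : Bool) :
    ∑' q, thetaTerm τ₁ τ₂ τ₁₂ a c b d x y (pairSumDiffEquiv ((e₁, e₂), q)).1 *
        thetaTerm τ₁ τ₂ τ₁₂ a' c' b d x y (pairSumDiffEquiv ((e₁, e₂), q)).2 =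
      Theta2 τ₁ τ₂ τ₁₂ ((a + a') / 2 + e₁.toNat) ((c + c') / 2 + e₂.toNat) (2 * b) (2 * d)
          (2 * x) (2 * y) *
        Theta2 τ₁ τ₂ τ₁₂ ((a - a') / 2 + e₁.toNat) ((c - c') / 2 + e₂.toNat) 0 0 0 0 := by
  have h2τ₁ : 0 < (2 * τ₁).im := by simpa using hτ₁
  have h2τ₂ : 0 < (2 * τ₂).im := by simpa using hτ₂
  have h2τ : (2 * τ₁₂).im ^ 2 < (2 * τ₁).im * (2 * τ₂).im := by
    simp only [mul_im, re_ofNat, im_ofNat, zero_mul, add_zero]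
    nlinarith
  rw [Theta2, Theta2, theta_eq_tsum, theta_eq_tsum, tsum_mul_tsum_of_summable_norm
    (summable_norm_thetaTerm h2τ₁ h2τ₂ h2τ ..) (summable_norm_thetaTerm h2τ₁ h2τ₂ h2τ ..)]
  refine tsum_congr fun ⟨⟨k₁, k₂⟩, ⟨l₁, l₂⟩⟩ => ?_
  rw [pairSumDiffEquiv_apply]
  exact_mod_cast
    thetaTerm_mul_thetaTerm τ₁ τ₂ τ₁₂ a c a' c' b d x y e₁.toNat e₂.toNat k₁ k₂ l₁ l₂

lemma theta_mul_theta {τ₁ τ₂ τ₁₂ : ℂ} (hτ₁ : 0 < τ₁.im) (hτ₂ : 0 < τ₂.im)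
    (hτ : τ₁₂.im ^ 2 < τ₁.im * τ₂.im) (a c a' c' b d : ℝ) (x y : ℂ) :
    theta τ₁ τ₂ τ₁₂ a c b d x y * theta τ₁ τ₂ τ₁₂ a' c' b d x y =
      Theta2 τ₁ τ₂ τ₁₂ ((a + a') / 2) ((c + c') / 2) (2 * b) (2 * d) (2 * x) (2 * y) *
          Theta2 τ₁ τ₂ τ₁₂ ((a - a') / 2) ((c - c') / 2) 0 0 0 0 +
        Theta2 τ₁ τ₂ τ₁₂ ((a + a') / 2) ((c + c') / 2 + 1) (2 * b) (2 * d) (2 * x) (2 * y) *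
          Theta2 τ₁ τ₂ τ₁₂ ((a - a') / 2) ((c - c') / 2 + 1) 0 0 0 0 +
        Theta2 τ₁ τ₂ τ₁₂ ((a + a') / 2 + 1) ((c + c') / 2) (2 * b) (2 * d) (2 * x) (2 * y) *
          Theta2 τ₁ τ₂ τ₁₂ ((a - a') / 2 + 1) ((c - c') / 2) 0 0 0 0 +
        Theta2 τ₁ τ₂ τ₁₂ ((a + a') / 2 + 1) ((c + c') / 2 + 1) (2 * b) (2 * d) (2 * x) (2 * y) *
          Theta2 τ₁ τ₂ τ₁₂ ((a - a') / 2 + 1) ((c - c') / 2 + 1) 0 0 0 0 := by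
  have hs := summable_norm_thetaTerm hτ₁ hτ₂ hτ
  have hprod := summable_mul_of_summable_norm (hs a c b d x y) (hs a' c' b d x y)
  have hsplit : Summable fun w => thetaTerm τ₁ τ₂ τ₁₂ a c b d x y (pairSumDiffEquiv w).1 *
      thetaTerm τ₁ τ₂ τ₁₂ a' c' b d x y (pairSumDiffEquiv w).2 :=
    pairSumDiffEquiv.summable_iff.mpr hprod
  rw [theta_eq_tsum, theta_eq_tsum, tsum_mul_tsum_of_summable_norm (hs ..) (hs ..),
    ← pairSumDiffEquiv.tsum_eq, hsplit.tsum_prod' fun e => hsplit.comp_injective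
      (Prod.mk_right_injective e), tsum_fintype]
  simp only [Fintype.sum_prod_type, Fintype.sum_bool,
    tsum_thetaTerm_mul_thetaTerm_pairSumDiffEquiv hτ₁ hτ₂ hτ, Bool.toNat_true, Bool.toNat_false,
    Nat.cast_one, Nat.cast_zero, add_zero]
  ring

section Symmetries

variable (τ₁ τ₂ τ₁₂ : ℂ) (a c b d : ℝ) (x y : ℂ)

lemma theta_upper_fst_add_two :
    theta τ₁ τ₂ τ₁₂ (a + 2) c b d x y = theta τ₁ τ₂ τ₁₂ a c b d x y := by
  rw [theta_eq_tsum, theta_eq_tsum,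
    ← ((Equiv.addRight (1 : ℤ)).prodCongr (Equiv.refl ℤ)).tsum_eq
      (thetaTerm τ₁ τ₂ τ₁₂ a c b d x y)]
  refine tsum_congr fun _ => ?_
  simp only [thetaTerm, Equiv.prodCongr_apply, Prod.map, Equiv.coe_addRight, Equiv.refl_apply]
  congr 1
  push_cast
  ring

lemma theta_upper_snd_add_two :
    theta τ₁ τ₂ τ₁₂ a (c + 2) b d x y = theta τ₁ τ₂ τ₁₂ a c b d x y := by
  rw [theta_eq_tsum, theta_eq_tsum,
    ← ((Equiv.refl ℤ).prodCongr (Equiv.addRight (1 : ℤ))).tsum_eq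
      (thetaTerm τ₁ τ₂ τ₁₂ a c b d x y)]
  refine tsum_congr fun _ => ?_
  simp only [thetaTerm, Equiv.prodCongr_apply, Prod.map, Equiv.coe_addRight, Equiv.refl_apply]
  congr 1
  push_cast
  ring

lemma theta_neg :
    theta τ₁ τ₂ τ₁₂ (-a) (-c) (-b) (-d) (-x) (-y) = theta τ₁ τ₂ τ₁₂ a c b d x y := by
  rw [theta_eq_tsum, theta_eq_tsum, ← ((Equiv.neg ℤ).prodCongr (Equiv.neg ℤ)).tsum_eq]
  refine tsum_congr fun _ => ?_
  simp only [thetaTerm, Equiv.prodCongr_apply, Prod.map, Equiv.neg_apply]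
  congr 1
  push_cast
  ring

lemma theta_lower_fst_add_two :
    theta τ₁ τ₂ τ₁₂ a c (b + 2) d x y = cexp (π * I * a) * theta τ₁ τ₂ τ₁₂ a c b d x y := by
  rw [theta_eq_tsum, theta_eq_tsum, ← tsum_mul_left]
  refine tsum_congr fun p => ?_
  rw [thetaTerm, thetaTerm, ← Complex.exp_add]
  exact Complex.exp_eq_exp_iff_exists_int.mpr ⟨p.1, by push_cast; ring⟩

end Symmetries

lemma theta_mul_theta_sub_theta_mul_theta {τ₁ τ₂ τ₁₂ : ℂ} (hτ₁ : 0 < τ₁.im) (hτ₂ : 0 < τ₂.im)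
    (hτ : τ₁₂.im ^ 2 < τ₁.im * τ₂.im) (b : ℝ) (u v : ℂ) :
    theta τ₁ τ₂ τ₁₂ 1 1 b 0 u v * theta τ₁ τ₂ τ₁₂ 0 0 b 0 u v *
          Theta2 τ₁ τ₂ τ₁₂ (1/2) (1/2) 0 0 0 0 -
        theta τ₁ τ₂ τ₁₂ 0 1 b 0 u v * theta τ₁ τ₂ τ₁₂ 1 0 b 0 u v *
          Theta2 τ₁ τ₂ τ₁₂ (1/2) (-(1/2)) 0 0 0 0 =
      (Theta2 τ₁ τ₂ τ₁₂ (1/2) (1/2) (2 * b) 0 (2 * u) (2 * v) +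
          Theta2 τ₁ τ₂ τ₁₂ (-(1/2)) (-(1/2)) (2 * b) 0 (2 * u) (2 * v)) *
        (Theta2 τ₁ τ₂ τ₁₂ (1/2) (1/2) 0 0 0 0 ^ 2 -
          Theta2 τ₁ τ₂ τ₁₂ (1/2) (-(1/2)) 0 0 0 0 ^ 2) := by
  rw [theta_mul_theta hτ₁ hτ₂ hτ, theta_mul_theta hτ₁ hτ₂ hτ]
  have three_halves_fst (c B : ℝ) (X Y : ℂ) :
      Theta2 τ₁ τ₂ τ₁₂ (3/2) c B 0 X Y = Theta2 τ₁ τ₂ τ₁₂ (-(1/2)) c B 0 X Y := by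
    rw [Theta2, Theta2, show (3/2 : ℝ) = -(1/2) + 2 by norm_num, theta_upper_fst_add_two]
  have three_halves_snd (a B : ℝ) (X Y : ℂ) :
      Theta2 τ₁ τ₂ τ₁₂ a (3/2) B 0 X Y = Theta2 τ₁ τ₂ τ₁₂ a (-(1/2)) B 0 X Y := by
    rw [Theta2, Theta2, show (3/2 : ℝ) = -(1/2) + 2 by norm_num, theta_upper_snd_add_two]
  have neg_neg_at_zero :
      Theta2 τ₁ τ₂ τ₁₂ (-(1/2)) (-(1/2)) 0 0 0 0 = Theta2 τ₁ τ₂ τ₁₂ (1/2) (1/2) 0 0 0 0 := by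
    simpa [Theta2] using theta_neg (2 * τ₁) (2 * τ₂) (2 * τ₁₂) (1/2) (1/2) 0 0 0 0
  have neg_pos_at_zero :
      Theta2 τ₁ τ₂ τ₁₂ (-(1/2)) (1/2) 0 0 0 0 = Theta2 τ₁ τ₂ τ₁₂ (1/2) (-(1/2)) 0 0 0 0 := by
    simpa [Theta2] using theta_neg (2 * τ₁) (2 * τ₂) (2 * τ₁₂) (1/2) (-(1/2)) 0 0 0 0
  norm_num only
  simp only [three_halves_fst, three_halves_snd, neg_neg_at_zero, neg_pos_at_zero]
  ring

theorem inverse_half_characteristic_relation (τ₁ τ₂ τ₁₂ : ℂ)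
    (hτ₁ : 0 < τ₁.im) (hτ₂ : 0 < τ₂.im) (hτ : τ₁₂.im ^ 2 < τ₁.im * τ₂.im)
    (u v : ℂ) :
    2 * Theta2 τ₁ τ₂ τ₁₂ (1/2) (1/2) 0 0 (2 * u) (2 * v) *
        (Theta2 τ₁ τ₂ τ₁₂ (1/2) (1/2) 0 0 0 0 ^ 2 -
          Theta2 τ₁ τ₂ τ₁₂ (1/2) (-(1/2)) 0 0 0 0 ^ 2) =
      theta τ₁ τ₂ τ₁₂ 1 1 0 0 u v * theta τ₁ τ₂ τ₁₂ 0 0 0 0 u v *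
          Theta2 τ₁ τ₂ τ₁₂ (1/2) (1/2) 0 0 0 0 -
        theta τ₁ τ₂ τ₁₂ 0 1 0 0 u v * theta τ₁ τ₂ τ₁₂ 1 0 0 0 u v *
          Theta2 τ₁ τ₂ τ₁₂ (1/2) (-(1/2)) 0 0 0 0 -
        Complex.I *
          (theta τ₁ τ₂ τ₁₂ 1 1 1 0 u v * theta τ₁ τ₂ τ₁₂ 0 0 1 0 u v *
              Theta2 τ₁ τ₂ τ₁₂ (1/2) (1/2) 0 0 0 0 -
            theta τ₁ τ₂ τ₁₂ 1 0 1 0 u v * theta τ₁ τ₂ τ₁₂ 0 1 1 0 u v *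
              Theta2 τ₁ τ₂ τ₁₂ (1/2) (-(1/2)) 0 0 0 0) := by
  have hb₀ := theta_mul_theta_sub_theta_mul_theta hτ₁ hτ₂ hτ 0 u v
  have hb₁ := theta_mul_theta_sub_theta_mul_theta hτ₁ hτ₂ hτ 1 u v
  have phase (α β : ℝ) : Theta2 τ₁ τ₂ τ₁₂ α β 2 0 (2 * u) (2 * v) =
      cexp (π * I * α) * Theta2 τ₁ τ₂ τ₁₂ α β 0 0 (2 * u) (2 * v) := by
    rw [Theta2, Theta2, ← theta_lower_fst_add_two, zero_add]
  have exp_half : cexp (π * I * ((1/2 : ℝ) : ℂ)) = I := by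
    convert exp_pi_div_two_mul_I using 2; push_cast; ring
  have exp_neg_half : cexp (π * I * ((-(1/2) : ℝ) : ℂ)) = -I := by
    convert exp_neg_pi_div_two_mul_I using 2; push_cast; ring
  rw [mul_zero] at hb₀
  rw [mul_one, phase, phase, exp_half, exp_neg_half] at hb₁
  linear_combination -hb₀ + I * hb₁ + (Theta2 τ₁ τ₂ τ₁₂ (1/2) (1/2) 0 0 (2 * u) (2 * v) -
      Theta2 τ₁ τ₂ τ₁₂ (-(1/2)) (-(1/2)) 0 0 (2 * u) (2 * v)) *
      (Theta2 τ₁ τ₂ τ₁₂ (1/2) (1/2) 0 0 0 0 ^ 2 -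
        Theta2 τ₁ τ₂ τ₁₂ (1/2) (-(1/2)) 0 0 0 0 ^ 2) * I_sq
end

section
/- Half-characteristic constants relations connecting the D sector with the A sector: θ[1,1;0,0](0,0) · θ[0,0;0,0](0,0) = 2 · ( Θ[1/2,1/2;0,0](0,0)² + Θ[1/2,−1/2;0,0](0,0)² ) and θ[0,1;0,0](0,0) · θ[1,0;0,0](0,0) = 4 · Θ[1/2,1/2;0,0](0,0) · Θ[1/2,−1/2;0,0](0,0). -/
open Complex

/-!
Both identities are instances of the genus-two addition formula
`θ[a,c](0) θ[a',c'](0) = ∑_{ε ∈ {0,1}²} Θ[(a+a')/2 + ε](0) Θ[(a-a')/2 + ε](0)`.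
It follows from the parallelogram law `Q u + Q u' = 2 Q ((u+u')/2) + 2 Q ((u-u')/2)` for the
quadratic form in the exponent, after reindexing pairs `(p, q) ∈ ℤ² × ℤ²` by the parity `ε` of
`p + q` and the lattice points `(p + q - ε)/2`, `(p - q - ε)/2`. The characteristics `3/2` and
`-1/2` that appear are then reduced to `±1/2`, since `θ[a,c](0)` only depends on `±(a,c)`
modulo `2ℤ²`.
-/

noncomputable def gaussTerm (τ₁ τ₂ τ₁₂ u v : ℂ) : ℂ :=
  Complex.exp ((Real.pi : ℂ) * Complex.I * (τ₁ * u ^ 2 + τ₂ * v ^ 2 + 2 * τ₁₂ * u * v))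

lemma gaussTerm_neg (τ₁ τ₂ τ₁₂ u v : ℂ) :
    gaussTerm τ₁ τ₂ τ₁₂ (-u) (-v) = gaussTerm τ₁ τ₂ τ₁₂ u v := by
  unfold gaussTerm; ring_nf

lemma gaussTerm_mul_gaussTerm (τ₁ τ₂ τ₁₂ u v u' v' : ℂ) :
    gaussTerm τ₁ τ₂ τ₁₂ u v * gaussTerm τ₁ τ₂ τ₁₂ u' v' =
      gaussTerm (2 * τ₁) (2 * τ₂) (2 * τ₁₂) ((u + u') / 2) ((v + v') / 2) *
        gaussTerm (2 * τ₁) (2 * τ₂) (2 * τ₁₂) ((u - u') / 2) ((v - v') / 2) := by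
  simp only [gaussTerm, ← Complex.exp_add]
  ring_nf

lemma norm_gaussTerm_ofReal (τ₁ τ₂ τ₁₂ : ℂ) (u v : ℝ) :
    ‖gaussTerm τ₁ τ₂ τ₁₂ u v‖ =
      Real.exp (-Real.pi * (τ₁.im * u ^ 2 + τ₂.im * v ^ 2 + 2 * τ₁₂.im * u * v)) := by
  rw [gaussTerm, Complex.norm_exp]
  congr 1
  simp only [Complex.add_re, Complex.mul_re, Complex.mul_im, Complex.add_im, Complex.ofReal_re,
    Complex.ofReal_im, Complex.I_re, Complex.I_im, pow_two, Complex.re_ofNat, Complex.im_ofNat]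
  ring

lemma summable_exp_neg_mul_add_sq_s17 {c : ℝ} (hc : 0 < c) (α : ℝ) :
    Summable fun n : ℤ => Real.exp (-c * (n + α) ^ 2) := by
  have hτ : 0 < (Complex.I * (c / Real.pi : ℝ)).im := by simp; positivity
  refine (((summable_jacobiTheta₂_term_iff (Complex.I * (c * α / Real.pi : ℝ)) _).2 hτ).norm
    |>.mul_left (Real.exp (-c * α ^ 2))).congr fun n => ?_
  simp only [norm_jacobiTheta₂_term, ← Real.exp_add, Complex.mul_im, Complex.I_re, Complex.I_im,
    Complex.ofReal_re, Complex.ofReal_im]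
  congr 1
  field_simp
  ring

lemma exists_pos_mul_sq_add_sq_le_s17 {A B C : ℝ} (hA : 0 < A) (hB : 0 < B) (hC : C ^ 2 < A * B) :
    ∃ c > 0, ∀ u v : ℝ, c * (u ^ 2 + v ^ 2) ≤ A * u ^ 2 + B * v ^ 2 + 2 * C * u * v := by
  -- `A - c = (A ^ 2 + C ^ 2) / (A + B)` and `(A - c) * (B - c) = C ^ 2 + c ^ 2`
  set c := (A * B - C ^ 2) / (A + B) with hc
  have hAc : c * (A + B) = A * B - C ^ 2 := by rw [hc]; field_simp
  refine ⟨c, by rw [hc]; apply div_pos <;> linarith, fun u v => ?_⟩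
  have hA' : 0 < A - c := by nlinarith [sq_nonneg C]
  refine le_of_sub_nonneg (nonneg_of_mul_nonneg_right ?_ hA')
  nlinarith [sq_nonneg ((A - c) * u + C * v), sq_nonneg (c * v)]

lemma summable_norm_gaussTerm {τ₁ τ₂ τ₁₂ : ℂ} (hτ₁ : 0 < τ₁.im) (hτ₂ : 0 < τ₂.im)
    (hτ : τ₁₂.im ^ 2 < τ₁.im * τ₂.im) (a b : ℝ) :
    Summable fun p : ℤ × ℤ => ‖gaussTerm τ₁ τ₂ τ₁₂ (p.1 + a) (p.2 + b)‖ := by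
  obtain ⟨c, hc, hQ⟩ := exists_pos_mul_sq_add_sq_le_s17 hτ₁ hτ₂ hτ
  have hπc : 0 < Real.pi * c := by positivity
  refine ((summable_exp_neg_mul_add_sq_s17 hπc a).mul_of_nonneg (summable_exp_neg_mul_add_sq_s17 hπc b)
    (fun _ => (Real.exp_pos _).le) (fun _ => (Real.exp_pos _).le)).of_nonneg_of_le
    (fun _ => norm_nonneg _) fun p => ?_
  have := hQ (p.1 + a) (p.2 + b)
  rw [← Real.exp_add]
  calc _ = ‖gaussTerm τ₁ τ₂ τ₁₂ ((p.1 + a : ℝ) : ℂ) ((p.2 + b : ℝ) : ℂ)‖ := by push_cast; rfl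
    _ ≤ _ := by rw [norm_gaussTerm_ofReal, Real.exp_le_exp]; nlinarith [Real.pi_pos]

lemma summable_norm_gaussTerm_two_mul {τ₁ τ₂ τ₁₂ : ℂ} (hτ₁ : 0 < τ₁.im) (hτ₂ : 0 < τ₂.im)
    (hτ : τ₁₂.im ^ 2 < τ₁.im * τ₂.im) (a b : ℝ) :
    Summable fun p : ℤ × ℤ => ‖gaussTerm (2 * τ₁) (2 * τ₂) (2 * τ₁₂) (p.1 + a) (p.2 + b)‖ := by
  have him : ∀ z : ℂ, (2 * z).im = 2 * z.im := by simp
  refine summable_norm_gaussTerm ?_ ?_ ?_ a b <;> simp only [him] <;> nlinarith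

lemma theta_zero_eq_tsum_gaussTerm (τ₁ τ₂ τ₁₂ : ℂ) (a c : ℝ) :
    theta τ₁ τ₂ τ₁₂ a c 0 0 0 0 =
      ∑' p : ℤ × ℤ, gaussTerm τ₁ τ₂ τ₁₂ (p.1 + a / 2) (p.2 + c / 2) := by
  simp [theta, gaussTerm]

lemma theta_zero_neg (τ₁ τ₂ τ₁₂ : ℂ) (a c : ℝ) :
    theta τ₁ τ₂ τ₁₂ (-a) (-c) 0 0 0 0 = theta τ₁ τ₂ τ₁₂ a c 0 0 0 0 := by
  simp only [theta_zero_eq_tsum_gaussTerm]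
  rw [← (Equiv.prodCongr (Equiv.neg ℤ) (Equiv.neg ℤ)).tsum_eq]
  refine tsum_congr fun p => ?_
  rw [← gaussTerm_neg]
  simp only [Equiv.prodCongr_apply, Prod.map_fst, Prod.map_snd, Equiv.neg_apply]
  push_cast
  ring_nf

lemma theta_zero_eq_of_sub_eq_two_mul (τ₁ τ₂ τ₁₂ : ℂ) {a c a' c' : ℝ} {m n : ℤ}
    (ha : a' - a = 2 * m) (hc : c' - c = 2 * n) :
    theta τ₁ τ₂ τ₁₂ a' c' 0 0 0 0 = theta τ₁ τ₂ τ₁₂ a c 0 0 0 0 := by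
  obtain rfl : a' = a + 2 * m := by linarith
  obtain rfl : c' = c + 2 * n := by linarith
  simp only [theta_zero_eq_tsum_gaussTerm]
  rw [← (Equiv.prodCongr (Equiv.subRight m) (Equiv.subRight n)).tsum_eq]
  refine tsum_congr fun p => ?_
  simp only [Equiv.prodCongr_apply, Prod.map_fst, Prod.map_snd, Equiv.subRight_apply]
  push_cast
  ring_nf

lemma theta_zero_eq_of_add_eq_two_mul (τ₁ τ₂ τ₁₂ : ℂ) {a c a' c' : ℝ} {m n : ℤ}
    (ha : a' + a = 2 * m) (hc : c' + c = 2 * n) :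
    theta τ₁ τ₂ τ₁₂ a' c' 0 0 0 0 = theta τ₁ τ₂ τ₁₂ a c 0 0 0 0 := by
  rw [← theta_zero_neg τ₁ τ₂ τ₁₂ a c]
  exact theta_zero_eq_of_sub_eq_two_mul τ₁ τ₂ τ₁₂ (m := m) (n := n) (by linarith) (by linarith)

def parityEquiv : (Bool × Bool) × (ℤ × ℤ) × (ℤ × ℤ) ≃ (ℤ × ℤ) × (ℤ × ℤ) where
  toFun w :=
    ((w.2.1.1 + w.2.2.1 + w.1.1.toNat, w.2.1.2 + w.2.2.2 + w.1.2.toNat),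
      (w.2.1.1 - w.2.2.1, w.2.1.2 - w.2.2.2))
  invFun z :=
    ((decide ((z.1.1 + z.2.1) % 2 = 1), decide ((z.1.2 + z.2.2) % 2 = 1)),
      ((z.1.1 + z.2.1) / 2, (z.1.2 + z.2.2) / 2),
      ((z.1.1 + z.2.1) / 2 - z.2.1, (z.1.2 + z.2.2) / 2 - z.2.2))
  left_inv := by
    rintro ⟨⟨ε₁, ε₂⟩, ⟨k₁, k₂⟩, ⟨j₁, j₂⟩⟩
    cases ε₁ <;> cases ε₂ <;>
      simp only [Bool.toNat_true, Bool.toNat_false, Nat.cast_one, Nat.cast_zero, Prod.mk.injEq,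
        decide_eq_true_eq, decide_eq_false_iff_not] <;> omega
  right_inv := by
    rintro ⟨⟨m₁, m₂⟩, ⟨n₁, n₂⟩⟩
    obtain h₁ | h₁ := Int.emod_two_eq (m₁ + n₁) <;> obtain h₂ | h₂ := Int.emod_two_eq (m₂ + n₂) <;>
      simp only [h₁, h₂, decide_true, decide_false, zero_ne_one, Bool.toNat_true, Bool.toNat_false,
        Nat.cast_one, Nat.cast_zero, Prod.mk.injEq] <;> omega

theorem theta_zero_mul_theta_zero {τ₁ τ₂ τ₁₂ : ℂ} (hτ₁ : 0 < τ₁.im) (hτ₂ : 0 < τ₂.im)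
    (hτ : τ₁₂.im ^ 2 < τ₁.im * τ₂.im) (a c a' c' : ℝ) :
    theta τ₁ τ₂ τ₁₂ a c 0 0 0 0 * theta τ₁ τ₂ τ₁₂ a' c' 0 0 0 0 =
      ∑ ε : Bool × Bool,
        Theta2 τ₁ τ₂ τ₁₂ ((a + a') / 2 + ε.1.toNat) ((c + c') / 2 + ε.2.toNat) 0 0 0 0 *
          Theta2 τ₁ τ₂ τ₁₂ ((a - a') / 2 + ε.1.toNat) ((c - c') / 2 + ε.2.toNat) 0 0 0 0 := by
  have hsum : ∀ x y : ℝ, Summable fun p : ℤ × ℤ =>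
      ‖gaussTerm (2 * τ₁) (2 * τ₂) (2 * τ₁₂) (p.1 + x / 2) (p.2 + y / 2)‖ := fun x y => by
    simpa using summable_norm_gaussTerm_two_mul hτ₁ hτ₂ hτ (x / 2) (y / 2)
  set f := fun p : ℤ × ℤ => gaussTerm τ₁ τ₂ τ₁₂ (p.1 + a / 2) (p.2 + c / 2)
  set g := fun p : ℤ × ℤ => gaussTerm τ₁ τ₂ τ₁₂ (p.1 + a' / 2) (p.2 + c' / 2)
  set G := fun (ε : Bool × Bool) (k j : ℤ × ℤ) =>
    gaussTerm (2 * τ₁) (2 * τ₂) (2 * τ₁₂)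
        (k.1 + ((a + a') / 2 + ε.1.toNat : ℝ) / 2) (k.2 + ((c + c') / 2 + ε.2.toNat : ℝ) / 2) *
      gaussTerm (2 * τ₁) (2 * τ₂) (2 * τ₁₂)
        (j.1 + ((a - a') / 2 + ε.1.toNat : ℝ) / 2) (j.2 + ((c - c') / 2 + ε.2.toNat : ℝ) / 2)
  have hf : Summable fun p => ‖f p‖ := by
    simpa using summable_norm_gaussTerm hτ₁ hτ₂ hτ (a / 2) (c / 2)
  have hg : Summable fun p => ‖g p‖ := by
    simpa using summable_norm_gaussTerm hτ₁ hτ₂ hτ (a' / 2) (c' / 2)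
  have hfg : ∀ w, f (parityEquiv w).1 * g (parityEquiv w).2 = G w.1 w.2.1 w.2.2 := by
    rintro ⟨⟨ε₁, ε₂⟩, ⟨k₁, k₂⟩, ⟨j₁, j₂⟩⟩
    simp only [f, g, G, parityEquiv, Equiv.coe_fn_mk]
    rw [gaussTerm_mul_gaussTerm]
    push_cast
    ring_nf
  have hG : Summable fun w : (Bool × Bool) × (ℤ × ℤ) × (ℤ × ℤ) => G w.1 w.2.1 w.2.2 :=
    (parityEquiv.summable_iff.2 (summable_mul_of_summable_norm hf hg)).congr hfg
  calc theta τ₁ τ₂ τ₁₂ a c 0 0 0 0 * theta τ₁ τ₂ τ₁₂ a' c' 0 0 0 0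
      = ∑' z : (ℤ × ℤ) × (ℤ × ℤ), f z.1 * g z.2 := by
        rw [theta_zero_eq_tsum_gaussTerm, theta_zero_eq_tsum_gaussTerm]
        exact tsum_mul_tsum_of_summable_norm hf hg
    _ = ∑' w : (Bool × Bool) × (ℤ × ℤ) × (ℤ × ℤ), G w.1 w.2.1 w.2.2 := by
        rw [← parityEquiv.tsum_eq]
        exact tsum_congr hfg
    _ = ∑ ε, ∑' z : (ℤ × ℤ) × (ℤ × ℤ), G ε z.1 z.2 := by rw [hG.tsum_prod, tsum_fintype]
    _ = _ := Finset.sum_congr rfl fun ε _ => by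
        simp only [G, Theta2, theta_zero_eq_tsum_gaussTerm]
        exact (tsum_mul_tsum_of_summable_norm (hsum _ _) (hsum _ _)).symm

theorem half_characteristic_constants_DA (τ₁ τ₂ τ₁₂ : ℂ)
    (hτ₁ : 0 < τ₁.im) (hτ₂ : 0 < τ₂.im) (hτ : τ₁₂.im ^ 2 < τ₁.im * τ₂.im) :
    theta τ₁ τ₂ τ₁₂ 1 1 0 0 0 0 * theta τ₁ τ₂ τ₁₂ 0 0 0 0 0 0 =
        2 * (Theta2 τ₁ τ₂ τ₁₂ (1/2) (1/2) 0 0 0 0 ^ 2 +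
          Theta2 τ₁ τ₂ τ₁₂ (1/2) (-(1/2)) 0 0 0 0 ^ 2) ∧
      theta τ₁ τ₂ τ₁₂ 0 1 0 0 0 0 * theta τ₁ τ₂ τ₁₂ 1 0 0 0 0 0 =
        4 * Theta2 τ₁ τ₂ τ₁₂ (1/2) (1/2) 0 0 0 0 *
          Theta2 τ₁ τ₂ τ₁₂ (1/2) (-(1/2)) 0 0 0 0 := by
  have hDD := theta_zero_mul_theta_zero hτ₁ hτ₂ hτ 1 1 0 0
  have hAA := theta_zero_mul_theta_zero hτ₁ hτ₂ hτ 0 1 1 0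
  norm_num [Fintype.sum_prod_type] at hDD hAA
  have r₁ : Theta2 τ₁ τ₂ τ₁₂ (3/2) (3/2) 0 0 0 0 = Theta2 τ₁ τ₂ τ₁₂ (1/2) (1/2) 0 0 0 0 :=
    theta_zero_eq_of_add_eq_two_mul _ _ _ (m := 1) (n := 1) (by norm_num) (by norm_num)
  have r₂ : Theta2 τ₁ τ₂ τ₁₂ (-(1/2)) (3/2) 0 0 0 0 = Theta2 τ₁ τ₂ τ₁₂ (1/2) (1/2) 0 0 0 0 :=
    theta_zero_eq_of_add_eq_two_mul _ _ _ (m := 0) (n := 1) (by norm_num) (by norm_num)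
  have r₃ : Theta2 τ₁ τ₂ τ₁₂ (3/2) (1/2) 0 0 0 0 = Theta2 τ₁ τ₂ τ₁₂ (1/2) (-(1/2)) 0 0 0 0 :=
    theta_zero_eq_of_add_eq_two_mul _ _ _ (m := 1) (n := 0) (by norm_num) (by norm_num)
  have r₄ : Theta2 τ₁ τ₂ τ₁₂ (-(1/2)) (1/2) 0 0 0 0 = Theta2 τ₁ τ₂ τ₁₂ (1/2) (-(1/2)) 0 0 0 0 :=
    theta_zero_eq_of_add_eq_two_mul _ _ _ (m := 0) (n := 0) (by norm_num) (by norm_num)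
  have r₅ : Theta2 τ₁ τ₂ τ₁₂ (1/2) (3/2) 0 0 0 0 = Theta2 τ₁ τ₂ τ₁₂ (1/2) (-(1/2)) 0 0 0 0 :=
    theta_zero_eq_of_sub_eq_two_mul _ _ _ (m := 0) (n := 1) (by norm_num) (by norm_num)
  rw [r₁, r₃, r₅] at hDD
  rw [r₁, r₂, r₃, r₄, r₅] at hAA
  exact ⟨by rw [hDD]; ring, by rw [hAA]; ring⟩
end
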